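/- If ε ≥ r, then the complement ℝ² \ S_ε is a connected set (the hole has died: no bounded component of the complement remains). -/

import Mathlib

/-!
A point `y` outside `S_ε` can always run off to infinity along a ray on which its distance to
every point of `S` does not decrease, so it stays outside `S_ε`; far away the complement is the
exterior of a ball, which is path connected. If `‖y‖ ≥ r` the ray is radial. If `‖y‖ < r`, then
`y₂ > r sin θ`, since every point of the closed disc with `y₂ ≤ r sin θ` lies within `r ≤ ε` of
`S`, and the ray points straight up.
-/

open Metric Set
open scoped RealInnerProductSpace

theorem IsPathConnected.of_subset_of_forall_joinedIn {X : Type*} [TopologicalSpace X]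
    {U V : Set X} (hV : IsPathConnected V) (hVU : V ⊆ U)
    (hU : ∀ y ∈ U, ∃ z ∈ V, JoinedIn U y z) : IsPathConnected U := by
  obtain ⟨x, hx, hxV⟩ := hV
  refine ⟨x, hVU hx, fun y hy => ?_⟩
  obtain ⟨z, hz, hyz⟩ := hU y hy
  exact ((hxV hz).mono hVU).trans hyz.symm

theorem Metric.infEDist_le_infEDist_of_forall_dist_le {X : Type*} [PseudoMetricSpace X]
    {S : Set X} {y z : X} (h : ∀ q ∈ S, dist y q ≤ dist z q) : infEDist y S ≤ infEDist z S :=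
  le_infEDist.2 fun q hq => (infEDist_le_edist_of_mem hq).trans <| by
    simpa only [edist_dist] using ENNReal.ofReal_le_ofReal (h q hq)

theorem Metric.notMem_cthickening_of_forall_dist_le {X : Type*} [PseudoMetricSpace X]
    {S : Set X} {ε : ℝ} {y z : X} (hy : y ∉ cthickening ε S)
    (h : ∀ q ∈ S, dist y q ≤ dist z q) : z ∉ cthickening ε S := by
  simp only [mem_cthickening_iff, not_le] at hy ⊢
  exact hy.trans_le (infEDist_le_infEDist_of_forall_dist_le h)

section NormedSpace

variable {E : Type*} [NormedAddCommGroup E] [NormedSpace ℝ E]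

theorem isPathConnected_compl_closedBall (h : 1 < Module.rank ℝ E) (x : E) {R : ℝ}
    (hR : 0 ≤ R) : IsPathConnected (closedBall x R)ᶜ := by
  -- the exterior is the image of `{0}ᶜ` under `y ↦ x + (1 + R / ‖y‖) • y`
  let f : E → E := fun y ↦ x + (1 + R * ‖y‖⁻¹) • y
  have hf : ContinuousOn f {0}ᶜ := by
    intro y hy
    apply (continuousAt_const.add _).continuousWithinAt
    apply (continuousAt_const.add (continuousAt_const.mul
      (continuousAt_id.norm.inv₀ ?_))).smul continuousAt_id
    simpa using hy
  have himage : f '' {0}ᶜ = (closedBall x R)ᶜ := by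
    apply Subset.antisymm
    · rintro - ⟨y, hy, rfl⟩
      have : 0 < ‖y‖ := by simpa using hy
      simp only [f, mem_compl_iff, mem_closedBall, dist_self_add_left, norm_smul, not_le]
      rw [Real.norm_of_nonneg (by positivity), add_mul, inv_mul_cancel_right₀ this.ne']
      linarith
    · intro z hz
      have hz' : R < ‖z - x‖ := by simpa [dist_eq_norm] using hz
      have hpos : 0 < ‖z - x‖ := hR.trans_lt hz'
      have ha : 0 < 1 - R / ‖z - x‖ := sub_pos.2 ((div_lt_one hpos).2 hz')
      refine ⟨(1 - R / ‖z - x‖) • (z - x), by simp [ha.ne', norm_pos_iff.1 hpos], ?_⟩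
      have hcoef : (1 + R * ‖(1 - R / ‖z - x‖) • (z - x)‖⁻¹) * (1 - R / ‖z - x‖) = 1 := by
        rw [norm_smul, Real.norm_of_nonneg ha.le]
        have : ‖z - x‖ - R ≠ 0 := sub_ne_zero.2 hz'.ne'
        field_simp
        ring
      simp only [f, smul_smul, hcoef, one_smul, add_sub_cancel]
  exact himage ▸ (isPathConnected_compl_singleton_of_one_lt_rank h 0).image' hf

theorem joinedIn_add_of_forall_add_smul_mem {F : Set E} {y v : E}
    (h : ∀ t ∈ Icc (0 : ℝ) 1, y + t • v ∈ F) : JoinedIn F y (y + v) :=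
  JoinedIn.ofLine (f := fun t : ℝ => y + t • v) (by fun_prop) (by simp) (by simp)
    (by rintro - ⟨t, ht, rfl⟩; exact h t ht)

theorem dist_div_norm_smul_self {r : ℝ} {y : E} (hy0 : y ≠ 0) (hy : ‖y‖ ≤ r) :
    dist y ((r / ‖y‖) • y) = r - ‖y‖ := by
  have hpos : 0 < ‖y‖ := norm_pos_iff.2 hy0
  rw [dist_eq_norm, show y - (r / ‖y‖) • y = (1 - r / ‖y‖) • y by rw [sub_smul, one_smul],
    norm_smul, Real.norm_eq_abs, abs_sub_comm,
    abs_of_nonneg (sub_nonneg.2 ((one_le_div hpos).2 hy)), sub_mul, div_mul_cancel₀ _ hpos.ne']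
  ring

end NormedSpace

section InnerProductSpace

variable {E : Type*} [NormedAddCommGroup E] [InnerProductSpace ℝ E]

theorem dist_le_dist_add_smul_of_inner_nonneg {y q v : E} (h : 0 ≤ ⟪y - q, v⟫) {t : ℝ}
    (ht : 0 ≤ t) : dist y q ≤ dist (y + t • v) q := by
  rw [dist_eq_norm, dist_eq_norm, add_sub_right_comm]
  refine le_of_sq_le_sq ?_ (norm_nonneg _)
  rw [norm_add_sq_real, real_inner_smul_right, norm_smul, Real.norm_of_nonneg ht]
  nlinarith [norm_nonneg v, mul_nonneg ht h]

theorem inner_sub_nonneg_of_norm_le {y q : E} (h : ‖q‖ ≤ ‖y‖) : 0 ≤ ⟪y - q, y⟫ := by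
  rw [inner_sub_left, real_inner_self_eq_norm_sq, sub_nonneg]
  calc ⟪q, y⟫ ≤ ‖q‖ * ‖y‖ := real_inner_le_norm q y
    _ ≤ ‖y‖ ^ 2 := by nlinarith [norm_nonneg y]

theorem joinedIn_compl_cthickening_add {S : Set E} {ε : ℝ} {y v : E}
    (hy : y ∉ cthickening ε S) (hv : ∀ q ∈ S, 0 ≤ ⟪y - q, v⟫) :
    JoinedIn (cthickening ε S)ᶜ y (y + v) :=
  joinedIn_add_of_forall_add_smul_mem fun _ ht => notMem_cthickening_of_forall_dist_le hy
    fun q hq => dist_le_dist_add_smul_of_inner_nonneg (hv q hq) ht.1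

theorem isPathConnected_compl_cthickening_of_forall_exists_inner_nonneg
    (hE : 1 < Module.rank ℝ E) {S : Set E} (hS : Bornology.IsBounded S) (ε : ℝ)
    (h : ∀ y ∉ cthickening ε S, ∃ v ≠ 0, ∀ q ∈ S, 0 ≤ ⟪y - q, v⟫) :
    IsPathConnected (cthickening ε S)ᶜ := by
  obtain ⟨R, hR, hSR⟩ := hS.cthickening.subset_closedBall_lt 0 0
  refine (isPathConnected_compl_closedBall hE 0 hR.le).of_subset_of_forall_joinedIn
    (compl_subset_compl.2 hSR) fun y hy => ?_
  obtain ⟨v, hv0, hv⟩ := h y hy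
  have hT : 0 ≤ (R + ‖y‖ + 1) / ‖v‖ := by positivity
  refine ⟨y + ((R + ‖y‖ + 1) / ‖v‖) • v, ?_, joinedIn_compl_cthickening_add hy
    fun q hq => by rw [real_inner_smul_right]; exact mul_nonneg hT (hv q hq)⟩
  have hTv : ‖((R + ‖y‖ + 1) / ‖v‖) • v‖ = R + ‖y‖ + 1 := by
    rw [norm_smul, Real.norm_of_nonneg hT, div_mul_cancel₀ _ (norm_ne_zero_iff.2 hv0)]
  have := norm_sub_le (y + ((R + ‖y‖ + 1) / ‖v‖) • v) y
  simp only [mem_compl_iff, mem_closedBall, dist_zero_right, not_le, add_sub_cancel_left,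
    hTv] at this ⊢
  linarith

end InnerProductSpace

theorem EuclideanSpace.norm_sq_fin_two (x : EuclideanSpace ℝ (Fin 2)) :
    ‖x‖ ^ 2 = x 0 ^ 2 + x 1 ^ 2 := by
  simp [EuclideanSpace.real_norm_sq_eq, Fin.sum_univ_two]

theorem EuclideanSpace.dist_sq_fin_two (x y : EuclideanSpace ℝ (Fin 2)) :
    dist x y ^ 2 = (x 0 - y 0) ^ 2 + (x 1 - y 1) ^ 2 := by
  simp [dist_eq_norm, EuclideanSpace.norm_sq_fin_two]

/-- The endpoint `(±√(r² - h²), h)` of the arc on the side of `y` is within `r` of `y`: up to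
reflection, `y` lies in the rectangle `[0, √(r² - h²)] × [0, h]` whose diagonal has length `r`. -/
theorem exists_mem_arc_dist_le_of_lt {r h : ℝ} (hr : 0 ≤ r) {y : EuclideanSpace ℝ (Fin 2)}
    (hy : ‖y‖ ≤ r) (hy1 : y 1 ≤ h) (hdir : ‖y‖ * h < y 1 * r) :
    ∃ q : EuclideanSpace ℝ (Fin 2), (‖q‖ = r ∧ q 1 ≤ h) ∧ dist y q ≤ r := by
  have hy2 := EuclideanSpace.norm_sq_fin_two y
  have hh : 0 < h := by
    by_contra! hh
    nlinarith [mul_nonpos_of_nonneg_of_nonpos (sub_nonneg.2 hy) hh,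
      mul_nonpos_of_nonneg_of_nonpos hr (sub_nonpos.2 hy1)]
  have hyh : 0 ≤ ‖y‖ * h := mul_nonneg (norm_nonneg y) hh.le
  have hy1pos : 0 < y 1 := by
    by_contra! h1
    nlinarith [mul_nonpos_of_nonneg_of_nonpos hr h1]
  have hy1le : y 1 ≤ ‖y‖ := by nlinarith [sq_nonneg (y 0), norm_nonneg y]
  have hhr : h < r := by nlinarith
  have hy0 : y 0 ^ 2 ≤ r ^ 2 - h ^ 2 := by
    have : (y 0 ^ 2 + y 1 ^ 2) * h ^ 2 < y 1 ^ 2 * r ^ 2 := by rw [← hy2]; nlinarith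
    nlinarith
  obtain ⟨x, hx2, hxy⟩ : ∃ x : ℝ, x ^ 2 = r ^ 2 - h ^ 2 ∧ 0 ≤ x * y 0 := by
    have hw := Real.sq_sqrt (by nlinarith : 0 ≤ r ^ 2 - h ^ 2)
    rcases le_total 0 (y 0) with h0 | h0
    · exact ⟨_, hw, mul_nonneg (Real.sqrt_nonneg _) h0⟩
    · exact ⟨-_, by rw [neg_sq, hw], by nlinarith [Real.sqrt_nonneg (r ^ 2 - h ^ 2)]⟩
  have hxy' : y 0 ^ 2 ≤ x * y 0 := by nlinarith
  refine ⟨!₂[x, h], ⟨?_, by simp⟩, ?_⟩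
  · refine (sq_eq_sq₀ (norm_nonneg _) hr).1 ?_
    simp [EuclideanSpace.norm_sq_fin_two, hx2]
  · refine le_of_sq_le_sq ?_ hr
    simp only [EuclideanSpace.dist_sq_fin_two, Matrix.cons_val_zero, Matrix.cons_val_one,
      Matrix.cons_val_fin_one]
    nlinarith

theorem exists_mem_arc_dist_le {r h : ℝ} (hr : 0 ≤ r) (hrh : -r ≤ h)
    {y : EuclideanSpace ℝ (Fin 2)} (hy : ‖y‖ ≤ r) (hy1 : y 1 ≤ h) :
    ∃ q : EuclideanSpace ℝ (Fin 2), (‖q‖ = r ∧ q 1 ≤ h) ∧ dist y q ≤ r := by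
  rcases eq_or_ne y 0 with rfl | hy0
  · refine ⟨!₂[0, -r], ⟨?_, by simpa using hrh⟩, ?_⟩ <;>
      simp [EuclideanSpace.norm_eq, Fin.sum_univ_two, Real.sqrt_sq hr]
  have hpos : 0 < ‖y‖ := norm_pos_iff.2 hy0
  rcases le_or_gt (y 1 * r) (‖y‖ * h) with hdir | hdir
  · refine ⟨(r / ‖y‖) • y, ⟨?_, ?_⟩, ?_⟩
    · rw [norm_smul, Real.norm_of_nonneg (by positivity), div_mul_cancel₀ _ hpos.ne']
    · rw [PiLp.smul_apply, smul_eq_mul, div_mul_eq_mul_div, div_le_iff₀ hpos]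
      linarith
    · linarith [dist_div_norm_smul_self hy0 hy]
  · exact exists_mem_arc_dist_le_of_lt hr hy hy1 hdir

theorem arc_complement_connected_after_death
    (r θ ε : ℝ) (hr : 0 < r)
    (S : Set (EuclideanSpace ℝ (Fin 2)))
    (hS : S = {p : EuclideanSpace ℝ (Fin 2) | ‖p‖ = r ∧ p 1 ≤ r * Real.sin θ})
    (hε : r ≤ ε) :
    IsConnected (Metric.cthickening ε S)ᶜ := by
  subst hS
  have hbdd : Bornology.IsBounded
      {p : EuclideanSpace ℝ (Fin 2) | ‖p‖ = r ∧ p 1 ≤ r * Real.sin θ} :=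
    isBounded_sphere (x := 0) (r := r) |>.subset fun p hp => by simpa using hp.1
  have hrank : 1 < Module.rank ℝ (EuclideanSpace ℝ (Fin 2)) := by
    rw [← Module.finrank_eq_rank, finrank_euclideanSpace_fin]; norm_num
  refine (isPathConnected_compl_cthickening_of_forall_exists_inner_nonneg hrank hbdd ε
    fun y hy => ?_).isConnected
  rcases le_or_gt r ‖y‖ with hyr | hyr
  · exact ⟨y, norm_pos_iff.1 (hr.trans_le hyr),
      fun q hq => inner_sub_nonneg_of_norm_le (hq.1.trans_le hyr)⟩
  have hy1 : r * Real.sin θ < y 1 := by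
    by_contra! hy1
    obtain ⟨q, hq, hdist⟩ := exists_mem_arc_dist_le hr.le
      (by nlinarith [Real.neg_one_le_sin θ]) hyr.le hy1
    exact hy (mem_cthickening_of_dist_le y q ε _ hq (hdist.trans hε))
  refine ⟨EuclideanSpace.single 1 1, by simp, fun q hq => ?_⟩
  simpa [EuclideanSpace.inner_single_right] using (hq.2.trans hy1.le)
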